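/- Let π : H → G be a surjective group homomorphism with finite kernel N, let μ : G → ℝ be a finitely supported function, and define ζ : H → ℝ by ζ(h) = μ(π(h)) / |N|. Then for every n ≥ 1 and every subset A ⊆ G, the total mass that the n-fold convolution power ζ^{*n} assigns to the preimage π⁻¹(A) equals the total mass that μ^{*n} assigns to A; that is, ∑_{h ∈ π⁻¹(A)} ζ^{*n}(h) = ∑_{a ∈ A} μ^{*n}(a). -/

import Mathlib

open Finset

/-!
Pushing forward along `π` is a ring homomorphism `ℝ[H] → ℝ[G]`, and it sends `ζ` to `μ` because
every fibre of `π` is a coset of the kernel, hence has `|N|` elements. So it sends `ζ ^ n` to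
`μ ^ n`, and the mass of any function on `π⁻¹(A)` is the mass of its pushforward on `A`.
-/

namespace Finsupp

variable {α β M : Type*} [AddCommMonoid M]

theorem mapDomain_apply_eq_sum_toFinset (x : α →₀ M) (f : α → β) {b : β}
    (hb : (f ⁻¹' {b}).Finite) : x.mapDomain f b = ∑ i ∈ hb.toFinset, x i := by
  classical
  rw [mapDomain, sum_apply, sum]
  simp_rw [single_apply]
  rw [← Finset.sum_filter]
  refine Finset.sum_subset (fun i hi => ?_) (fun i _ hi => ?_)
  · simpa using (Finset.mem_filter.1 hi).2
  · simp_all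

theorem sum_filter_comp_eq_sum_filter_mapDomain (x : α →₀ M) (f : α → β) (p : β → Prop)
    [DecidablePred p] :
    ∑ i ∈ x.support with p (f i), x i = ∑ b ∈ (x.mapDomain f).support with p b, x.mapDomain f b := by
  simp only [Finset.sum_filter]
  exact (sum_mapDomain_index (h := fun b (m : M) => if p b then m else 0) (fun _ => ite_self 0)
    (fun b _ _ => by split_ifs <;> simp)).symm

end Finsupp

namespace MonoidAlgebra

variable {G H : Type*} [Group G] [Group H] {π : H →* G}

theorem mapDomain_eq_of_coeff_eq_div_card_ker (hπ : Function.Surjective π) (hker : Finite π.ker)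
    {μ : MonoidAlgebra ℝ G} {ζ : MonoidAlgebra ℝ H}
    (hζ : ∀ h : H, ζ.coeff h = μ.coeff (π h) / Nat.card π.ker) :
    mapDomain π ζ = μ := by
  ext a
  have hfiber : π ⁻¹' {a} ≃ π.ker := π.fiberEquivKerOfSurjective hπ a
  have hfin : (π ⁻¹' {a}).Finite := Finite.of_equiv _ hfiber.symm
  have hcard : #hfin.toFinset = Nat.card π.ker := by
    rw [← Set.ncard_eq_toFinset_card _ hfin, ← Nat.card_coe_set_eq, Nat.card_congr hfiber]
  have hconst : ∀ h ∈ hfin.toFinset, ζ.coeff h = μ.coeff a / Nat.card π.ker := fun h hh => by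
    rw [hζ, (by simpa using hh : π h = a)]
  rw [coeff_mapDomain, Finsupp.mapDomain_apply_eq_sum_toFinset _ _ hfin, sum_congr rfl hconst,
    sum_const, nsmul_eq_mul, hcard, mul_div_cancel₀]
  exact_mod_cast Nat.card_pos.ne'

end MonoidAlgebra

theorem convolution_power_lift_mass_general {G H : Type*} [Group G] [Group H]
    (π : H →* G) (hπ : Function.Surjective π) (hker : Finite π.ker)
    (μ : MonoidAlgebra ℝ G) (ζ : MonoidAlgebra ℝ H)
    (hζ : ∀ h : H, ζ.coeff h = μ.coeff (π h) / (Nat.card π.ker))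
    (n : ℕ) (A : Set G) [DecidablePred (· ∈ A)] :
    ∑ h ∈ (ζ ^ n).coeff.support.filter (fun h => π h ∈ A), (ζ ^ n).coeff h
      = ∑ a ∈ (μ ^ n).coeff.support.filter (fun a => a ∈ A), (μ ^ n).coeff a := by
  have hpow : MonoidAlgebra.mapDomain π (ζ ^ n) = μ ^ n := by
    rw [← MonoidAlgebra.mapDomainRingHom_apply ℝ, map_pow, MonoidAlgebra.mapDomainRingHom_apply,
      MonoidAlgebra.mapDomain_eq_of_coeff_eq_div_card_ker hπ hker hζ]
  rw [Finsupp.sum_filter_comp_eq_sum_filter_mapDomain, ← MonoidAlgebra.coeff_mapDomain, hpow]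

/-- Let `π : H → G` be a surjective group homomorphism with finite kernel `N`, let `μ` be a
finitely supported real-valued function on `G` (an element of the monoid algebra
`MonoidAlgebra ℝ G`, whose multiplication is convolution), and let `ζ` be the finitely
supported function on `H` given by `ζ(h) = μ(π(h)) / |N|`. Then for every `n ≥ 1` and every
subset `A ⊆ G`, the total mass of the `n`-fold convolution power `ζ^{*n}` on `π⁻¹(A)` equals
the total mass of `μ^{*n}` on `A`. -/
theorem convolution_power_lift_mass {G H : Type*} [Group G] [Group H]
    (π : H →* G) (hπ : Function.Surjective π) (hker : Finite π.ker)
    (μ : MonoidAlgebra ℝ G) (ζ : MonoidAlgebra ℝ H)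
    (hζ : ∀ h : H, ζ.coeff h = μ.coeff (π h) / (Nat.card π.ker))
    (n : ℕ) (hn : 1 ≤ n) (A : Set G) [DecidablePred (· ∈ A)] :
    ∑ h ∈ (ζ ^ n).coeff.support.filter (fun h => π h ∈ A), (ζ ^ n).coeff h
      = ∑ a ∈ (μ ^ n).coeff.support.filter (fun a => a ∈ A), (μ ^ n).coeff a :=
  convolution_power_lift_mass_general π hπ hker μ ζ hζ n A
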